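/- arXiv:1508.05768 — 3 statements merged into one kernel-verified Lean document; each statement's English description precedes it below -/
import Mathlib

section
/- For q ∈ ℂˣ define u_q(k) = |q|^{Σ_{i<j} k_i k_j} and w_{B,ρ}(k) = ([k]_{|q|²}!/[|k|]_{|q|²}!)^{1/2} u_q(k) ρ^{|k|} for ρ > 0. Then the norm ‖Σ_k c_k x^k‖ = Σ_k |c_k| w_{B,ρ}(k) on 𝒪_q^reg(ℂⁿ) is submultiplicative; equivalently, for all k, ℓ ∈ ℤ₊ⁿ: w_{B,ρ}(k+ℓ) · |q|^{−Σ_{i>j} k_i ℓ_j} ≤ w_{B,ρ}(k) · w_{B,ρ}(ℓ). -/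
open Finset

/-- `[m]_q = 1 + q + ⋯ + q^(m-1)`. -/
noncomputable def qNum (s : ℝ) (m : ℕ) : ℝ := ∑ i ∈ Finset.range m, s ^ i

/-- `[m]_q! = [1]_q ⋯ [m]_q`, with `[0]_q! = 1`. -/
noncomputable def qFact (s : ℝ) (m : ℕ) : ℝ := ∏ i ∈ Finset.range m, qNum s (i + 1)

/-- `[k]_q! = [k₁]_q! ⋯ [kₙ]_q!` for a multi-index `k`. -/
noncomputable def qFactM {n : ℕ} (s : ℝ) (k : Fin n → ℕ) : ℝ := ∏ i, qFact s (k i)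

/-- `Σ_{i<j} kᵢ ℓⱼ`. -/
def sumLT {n : ℕ} (k l : Fin n → ℕ) : ℕ :=
  ∑ p ∈ Finset.univ.filter (fun p : Fin n × Fin n => p.1 < p.2), k p.1 * l p.2

/-- `Σ_{i>j} kᵢ ℓⱼ`. -/
def sumGT {n : ℕ} (k l : Fin n → ℕ) : ℕ :=
  ∑ p ∈ Finset.univ.filter (fun p : Fin n × Fin n => p.2 < p.1), k p.1 * l p.2

/-- The weight `w_{B,ρ}(k) = ([k]_{|q|²}!/[|k|]_{|q|²}!)^(1/2) |q|^(Σ_{i<j} kᵢ kⱼ) ρ^|k|`. -/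
noncomputable def wBall {n : ℕ} (q : ℂ) (ρ : ℝ) (k : Fin n → ℕ) : ℝ :=
  Real.sqrt (qFactM (‖q‖ ^ 2) k / qFact (‖q‖ ^ 2) (∑ i, k i)) *
    ‖q‖ ^ (sumLT k k) * ρ ^ (∑ i, k i)

/-!
The Gaussian binomial `[x+y choose x]_s` is the generating polynomial, by number of inversions, of
the words with `x` zeros and `y` ones. Concatenating a word with `a` zeros and `b` ones and a word
with `c` zeros and `d` ones creates at least the `a * d` inversions between the two blocks, whence
`[a+b choose a]_s [c+d choose c]_s s^(a d) ≤ [a+b+c+d choose a+c]_s` for `s ≥ 0`, which also follows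
by induction from the `s`-Pascal rule. Iterating over the coordinates of multi-indices gives
`∏ᵢ [kᵢ+ℓᵢ choose kᵢ]_s · s^(Σ_{i<j} kᵢ ℓⱼ) ≤ [|k|+|ℓ| choose |k|]_s`. With `s = |q|²` this is the
square of the claimed inequality, because
`Σ_{i<j} (k+ℓ)ᵢ(k+ℓ)ⱼ = Σ_{i<j} kᵢkⱼ + Σ_{i<j} ℓᵢℓⱼ + Σ_{i<j} kᵢℓⱼ + Σ_{i>j} kᵢℓⱼ`.
-/

section QAnalogues

variable {s : ℝ}

lemma qNum_pos (hs : 0 ≤ s) (m : ℕ) : 0 < qNum s (m + 1) := by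
  rw [qNum, Finset.sum_range_succ']
  positivity

lemma qNum_add (s : ℝ) (x y : ℕ) : qNum s (x + y) = qNum s x + s ^ x * qNum s y := by
  simp only [qNum, Finset.sum_range_add, Finset.mul_sum, pow_add]

lemma qFact_pos (hs : 0 ≤ s) (m : ℕ) : 0 < qFact s m :=
  Finset.prod_pos fun i _ => qNum_pos hs i

lemma qFact_zero (s : ℝ) : qFact s 0 = 1 := Finset.prod_range_zero _

lemma qFact_succ (s : ℝ) (m : ℕ) : qFact s (m + 1) = qFact s m * qNum s (m + 1) :=
  Finset.prod_range_succ _ _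

/-- The Gaussian binomial coefficient `[x+y choose x]_s`. -/
noncomputable def qBinom (s : ℝ) (x y : ℕ) : ℝ := qFact s (x + y) / (qFact s x * qFact s y)

lemma qBinom_pos (hs : 0 ≤ s) (x y : ℕ) : 0 < qBinom s x y :=
  div_pos (qFact_pos hs _) (mul_pos (qFact_pos hs _) (qFact_pos hs _))

lemma qBinom_zero_right (hs : 0 ≤ s) (x : ℕ) : qBinom s x 0 = 1 := by
  rw [qBinom, Nat.add_zero, qFact_zero, mul_one, div_self (qFact_pos hs x).ne']

lemma qBinom_zero_left (hs : 0 ≤ s) (y : ℕ) : qBinom s 0 y = 1 := by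
  rw [qBinom, Nat.zero_add, qFact_zero, one_mul, div_self (qFact_pos hs y).ne']

lemma qBinom_succ_succ (hs : 0 ≤ s) (x y : ℕ) :
    qBinom s (x + 1) (y + 1) = qBinom s x (y + 1) + s ^ (x + 1) * qBinom s (x + 1) y := by
  have hsplit : qFact s (x + 1 + (y + 1)) =
      qFact s (x + y + 1) * (qNum s (x + 1) + s ^ (x + 1) * qNum s (y + 1)) := by
    rw [← qNum_add, show x + 1 + (y + 1) = x + y + 1 + 1 by omega, qFact_succ]
  rw [qBinom, qBinom, qBinom, hsplit, show x + (y + 1) = x + y + 1 by omega,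
    show x + 1 + y = x + y + 1 by omega, qFact_succ s x, qFact_succ s y]
  have := (qFact_pos hs x).ne'
  have := (qFact_pos hs y).ne'
  have := (qNum_pos hs x).ne'
  have := (qNum_pos hs y).ne'
  field_simp

lemma qBinom_le_qBinom_succ_left (hs : 0 ≤ s) (x y : ℕ) : qBinom s x y ≤ qBinom s (x + 1) y := by
  cases y with
  | zero => rw [qBinom_zero_right hs, qBinom_zero_right hs]
  | succ y =>
    rw [qBinom_succ_succ hs]
    have := qBinom_pos hs (x + 1) y
    have := pow_nonneg hs (x + 1)
    nlinarith

lemma qBinom_mono_left (hs : 0 ≤ s) (y : ℕ) : Monotone fun x => qBinom s x y :=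
  monotone_nat_of_le_succ fun x => qBinom_le_qBinom_succ_left hs x y

lemma pow_mul_qBinom_le_qBinom_succ_right (hs : 0 ≤ s) (x y : ℕ) :
    s ^ x * qBinom s x y ≤ qBinom s x (y + 1) := by
  cases x with
  | zero => rw [qBinom_zero_left hs, qBinom_zero_left hs, pow_zero, one_mul]
  | succ x =>
    rw [qBinom_succ_succ hs]
    have := qBinom_pos hs x (y + 1)
    linarith

lemma pow_mul_qBinom_le_qBinom_add_right (hs : 0 ≤ s) (x y d : ℕ) :
    s ^ (x * d) * qBinom s x y ≤ qBinom s x (y + d) := by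
  induction d with
  | zero => simp
  | succ d ih =>
    calc s ^ (x * (d + 1)) * qBinom s x y = s ^ x * (s ^ (x * d) * qBinom s x y) := by ring
      _ ≤ s ^ x * qBinom s x (y + d) := by gcongr
      _ ≤ qBinom s x (y + (d + 1)) := pow_mul_qBinom_le_qBinom_succ_right hs x (y + d)

lemma qBinom_mul_qBinom_mul_pow_le (hs : 0 ≤ s) (a b c d : ℕ) :
    qBinom s a b * qBinom s c d * s ^ (a * d) ≤ qBinom s (a + c) (b + d) := by
  induction c generalizing d with
  | zero =>
    rw [qBinom_zero_left hs, mul_one, mul_comm, Nat.add_zero]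
    exact pow_mul_qBinom_le_qBinom_add_right hs a b d
  | succ c ihc =>
    induction d with
    | zero =>
      rw [qBinom_zero_right hs, Nat.mul_zero, pow_zero, mul_one, mul_one, Nat.add_zero]
      exact qBinom_mono_left hs b (Nat.le_add_right a (c + 1))
    | succ d ihd =>
      have hB := qBinom_pos hs a b
      calc qBinom s a b * qBinom s (c + 1) (d + 1) * s ^ (a * (d + 1))
          = qBinom s a b * qBinom s c (d + 1) * s ^ (a * (d + 1)) +
              s ^ (a + c + 1) * (qBinom s a b * qBinom s (c + 1) d * s ^ (a * d)) := by
            rw [qBinom_succ_succ hs]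
            ring
        _ ≤ qBinom s (a + c) (b + (d + 1)) + s ^ (a + c + 1) * qBinom s (a + (c + 1)) (b + d) := by
            gcongr
            exact ihc (d + 1)
        _ = qBinom s (a + (c + 1)) (b + (d + 1)) := by
            rw [← add_assoc a c 1, ← add_assoc b d 1, qBinom_succ_succ hs]

end QAnalogues

section MultiIndex

variable {n : ℕ}

lemma sumLT_eq_sum_sum (k l : Fin n → ℕ) :
    sumLT k l = ∑ i, ∑ j, if i < j then k i * l j else 0 := by
  rw [sumLT, Finset.sum_filter, Fintype.sum_prod_type]

lemma sumLT_succ (k l : Fin (n + 1) → ℕ) :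
    sumLT k l = k 0 * ∑ j, Fin.tail l j + sumLT (Fin.tail k) (Fin.tail l) := by
  rw [sumLT_eq_sum_sum, sumLT_eq_sum_sum, Fin.sum_univ_succ, Finset.mul_sum, Fin.sum_univ_succ]
  simp [Fin.succ_pos, Fin.succ_lt_succ_iff, Fin.sum_univ_succ, Fin.tail]

lemma sumGT_eq_sumLT (k l : Fin n → ℕ) : sumGT k l = sumLT l k :=
  Finset.sum_nbij' Prod.swap Prod.swap (by simp) (by simp) (by simp) (by simp)
    fun p _ => mul_comm _ _

lemma sumLT_add_add (k l : Fin n → ℕ) :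
    sumLT (k + l) (k + l) = sumLT k k + sumLT l l + sumLT k l + sumGT k l := by
  simp only [sumGT_eq_sumLT, sumLT, ← Finset.sum_add_distrib, Pi.add_apply]
  exact Finset.sum_congr rfl fun p _ => by ring

lemma prod_qBinom_mul_pow_sumLT_le {s : ℝ} (hs : 0 ≤ s) (k l : Fin n → ℕ) :
    (∏ i, qBinom s (k i) (l i)) * s ^ sumLT k l ≤ qBinom s (∑ i, k i) (∑ i, l i) := by
  induction n with
  | zero => simp [sumLT, qBinom_zero_right hs]
  | succ n ih =>
    rw [sumLT_succ, Fin.prod_univ_succ, Fin.sum_univ_succ k, Fin.sum_univ_succ l, pow_add]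
    have := qBinom_pos hs (k 0) (l 0)
    calc qBinom s (k 0) (l 0) * (∏ i, qBinom s (Fin.tail k i) (Fin.tail l i)) *
          (s ^ (k 0 * ∑ j, Fin.tail l j) * s ^ sumLT (Fin.tail k) (Fin.tail l))
        = qBinom s (k 0) (l 0) * ((∏ i, qBinom s (Fin.tail k i) (Fin.tail l i)) *
            s ^ sumLT (Fin.tail k) (Fin.tail l)) * s ^ (k 0 * ∑ j, Fin.tail l j) := by ring
      _ ≤ qBinom s (k 0) (l 0) * qBinom s (∑ i, Fin.tail k i) (∑ i, Fin.tail l i) *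
            s ^ (k 0 * ∑ j, Fin.tail l j) := by gcongr; exact ih _ _
      _ ≤ _ := qBinom_mul_qBinom_mul_pow_le hs _ _ _ _

lemma prod_qBinom_eq (s : ℝ) (k l : Fin n → ℕ) :
    ∏ i, qBinom s (k i) (l i) = qFactM s (k + l) / (qFactM s k * qFactM s l) := by
  simp only [qBinom, qFactM, ← Finset.prod_mul_distrib, ← Finset.prod_div_distrib, Pi.add_apply]

lemma qFactM_pos {s : ℝ} (hs : 0 ≤ s) (k : Fin n → ℕ) : 0 < qFactM s k :=
  Finset.prod_pos fun _ _ => qFact_pos hs _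

lemma sqrt_qFactM_div_mul_pow_sumLT_le {a : ℝ} (ha : 0 ≤ a) (k l : Fin n → ℕ) :
    √(qFactM (a ^ 2) (k + l) / qFact (a ^ 2) (∑ i, (k + l) i)) * a ^ sumLT k l ≤
      √(qFactM (a ^ 2) k / qFact (a ^ 2) (∑ i, k i)) *
        √(qFactM (a ^ 2) l / qFact (a ^ 2) (∑ i, l i)) := by
  have hs : 0 ≤ a ^ 2 := sq_nonneg a
  have hbinom := prod_qBinom_mul_pow_sumLT_le hs k l
  rw [prod_qBinom_eq, qBinom] at hbinom
  simp only [Pi.add_apply, Finset.sum_add_distrib] at hbinom ⊢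
  have := qFactM_pos hs k
  have := qFactM_pos hs l
  have := qFactM_pos hs (k + l)
  have := qFact_pos hs (∑ i, k i)
  have := qFact_pos hs (∑ i, l i)
  have := qFact_pos hs (∑ i, k i + ∑ i, l i)
  have hsq : qFactM (a ^ 2) (k + l) / qFact (a ^ 2) (∑ i, k i + ∑ i, l i) * (a ^ sumLT k l) ^ 2 ≤
      qFactM (a ^ 2) k / qFact (a ^ 2) (∑ i, k i) *
        (qFactM (a ^ 2) l / qFact (a ^ 2) (∑ i, l i)) := by
    rw [← pow_mul, mul_comm _ 2, pow_mul, div_mul_eq_mul_div, div_mul_div_comm,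
      div_le_div_iff₀ (by positivity) (by positivity)]
    rw [div_mul_eq_mul_div, div_le_div_iff₀ (by positivity) (by positivity)] at hbinom
    linarith
  calc _ = √(qFactM (a ^ 2) (k + l) / qFact (a ^ 2) (∑ i, k i + ∑ i, l i) *
        (a ^ sumLT k l) ^ 2) := by
        rw [Real.sqrt_mul' _ (by positivity), Real.sqrt_sq (by positivity)]
    _ ≤ _ := Real.sqrt_le_sqrt hsq
    _ = _ := Real.sqrt_mul (by positivity) _

end MultiIndex

/-- Submultiplicativity of the quantum-ball norm on `𝒪_q^reg(ℂⁿ)`, in its equivalent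
weight form: `w_{B,ρ}(k+ℓ) · |q|^(−Σ_{i>j} kᵢ ℓⱼ) ≤ w_{B,ρ}(k) · w_{B,ρ}(ℓ)`. -/
theorem stmt12 {n : ℕ} (q : ℂ) (hq : q ≠ 0) (ρ : ℝ) (hρ : 0 < ρ) (k l : Fin n → ℕ) :
    wBall q ρ (k + l) * (‖q‖ : ℝ) ^ (-(sumGT k l : ℤ)) ≤
      wBall q ρ k * wBall q ρ l := by
  have hroot := sqrt_qFactM_div_mul_pow_sumLT_le (norm_nonneg q) k l
  have hcancel : ‖q‖ ^ sumGT k l * ‖q‖ ^ (-(sumGT k l : ℤ)) = 1 := by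
    rw [zpow_neg, zpow_natCast, mul_inv_cancel₀ (pow_ne_zero _ (norm_ne_zero_iff.mpr hq))]
  unfold wBall
  set r := √(qFactM (‖q‖ ^ 2) (k + l) / qFact (‖q‖ ^ 2) (∑ i, (k + l) i))
  calc r * ‖q‖ ^ sumLT (k + l) (k + l) * ρ ^ (∑ i, (k + l) i) * ‖q‖ ^ (-(sumGT k l : ℤ))
      = (r * ‖q‖ ^ sumLT k l) * (‖q‖ ^ sumLT k k * ‖q‖ ^ sumLT l l * ρ ^ (∑ i, k i + ∑ i, l i)) *
          (‖q‖ ^ sumGT k l * ‖q‖ ^ (-(sumGT k l : ℤ))) := by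
        simp only [sumLT_add_add, pow_add, Pi.add_apply, Finset.sum_add_distrib]
        ring
    _ ≤ _ := by
        rw [hcancel, mul_one, pow_add ρ]
        refine (mul_le_mul_of_nonneg_right hroot (by positivity)).trans_eq ?_
        ring
end

section
/- Let q ∈ (0,1) and ρ > 0. For every element a = Σ_k c_k x^k of 𝒪_q^reg(ℂⁿ), the Fock-representation operator norm satisfies ‖π(γ_ρ(a))‖² ≥ (q²;q²)_∞ⁿ Σ_k |c_k|² w_q(k)² ρ^{2|k|}, where w_q(k) = q^{Σ_{i<j} k_i k_j} and γ_ρ is the algebra automorphism with γ_ρ(x_i) = ρ x_i. -/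
/-!
Applied to the vacuum `e 0`, the ordered monomial `T 0 ^ k 0 ⋯ T (n-1) ^ k (n-1)` is a multiple
`L_k • e k` of a single basis vector, so `π(γ_ρ(a)) (e 0) = Σ_k c_k ρ^|k| L_k • e k` and, by
orthonormality and `‖e 0‖ = 1`, `‖π(γ_ρ(a))‖² ≥ Σ_k |c_k|² ρ^(2|k|) L_k²`. Squaring the
Pusz–Woronowicz weights, `L_k² = ∏_j (∏_{t < k_j} (1 - q^(2(t+1)))) q^(2 k_j Σ_{i>j} k_i)`; each
finite product dominates `(q²;q²)_∞` and the exponents add up to `2 Σ_{i<j} k_i k_j`.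
-/

open Finset

lemma tprod_one_sub_pow_succ_le_prod_range {r : ℝ} (hr0 : 0 ≤ r) (hr1 : r < 1) (ℓ : ℕ) :
    ∏' j : ℕ, (1 - r ^ (j + 1)) ≤ ∏ t ∈ range ℓ, (1 - r ^ (t + 1)) := by
  have hmult : Multipliable fun j : ℕ => 1 - r ^ (j + 1) := by
    simpa [sub_eq_add_neg, pow_succ'] using Real.multipliable_one_add_of_summable
      ((summable_geometric_of_lt_one hr0 hr1).mul_left r).neg
  have hfactor : ∀ t : ℕ, 0 ≤ 1 - r ^ (t + 1) ∧ 1 - r ^ (t + 1) ≤ 1 := fun t =>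
    ⟨sub_nonneg.2 (pow_le_one₀ hr0 hr1.le), by linarith [pow_nonneg hr0 (t + 1)]⟩
  refine Antitone.le_of_tendsto (antitone_nat_of_succ_le fun m => ?_)
    hmult.tendsto_prod_tprod_nat ℓ
  rw [prod_range_succ]
  exact mul_le_of_le_one_right (prod_nonneg fun t _ => (hfactor t).1) (hfactor m).2

lemma one_sub_mul_qNum (s : ℝ) (m : ℕ) : (1 - s) * qNum s m = 1 - s ^ m := by
  rw [qNum, ← neg_sub, neg_mul, mul_comm, geom_sum_mul, neg_sub]

lemma sumLT_eq_sum_mul_sum_gt {n : ℕ} (k l : Fin n → ℕ) :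
    sumLT k l = ∑ j, k j * ∑ i ∈ univ.filter (fun i : Fin n => j < i), l i := by
  simp only [sumLT, sum_filter, Fintype.sum_prod_type, mul_sum, mul_ite, mul_zero]

/-- The multi-index reached from the vacuum once the factors `T i ^ k i`, `i > j`, and `t` copies
of `T j` of the ordered monomial `T 0 ^ k 0 ⋯ T (n-1) ^ k (n-1)` have acted. -/
def ladderIndex {n : ℕ} (k : Fin n → ℕ) (j : Fin n) (t : ℕ) : Fin n → ℕ :=
  fun i => if j < i then k i else if i = j then t else 0

lemma ladderIndex_zero {n : ℕ} (k : Fin (n + 1) → ℕ) (t : ℕ) :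
    ladderIndex k 0 t = Fin.cons 0 (Fin.tail k) + Pi.single 0 t := by
  ext i
  refine Fin.cases ?_ (fun i => ?_) i <;> simp [ladderIndex, Fin.succ_pos, Fin.tail]

lemma ladderIndex_succ {n : ℕ} (k : Fin (n + 1) → ℕ) (j : Fin n) (t : ℕ) :
    ladderIndex k j.succ t = Fin.cons 0 (ladderIndex (Fin.tail k) j t) := by
  ext i
  refine Fin.cases ?_ (fun i => ?_) i <;> simp [ladderIndex, Fin.tail, (Fin.succ_ne_zero j).symm]

lemma cons_zero_add_single_succ {α : Type*} [AddZeroClass α] {n : ℕ} (k : Fin n → α)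
    (j : Fin n) (m : α) :
    (Fin.cons 0 k : Fin (n + 1) → α) + Pi.single j.succ m = Fin.cons 0 (k + Pi.single j m) := by
  ext i
  refine Fin.cases ?_ (fun i => ?_) i <;> simp [Pi.single_apply]

section WeightedShift

variable {R M : Type*} [CommSemiring R] [TopologicalSpace M] [AddCommMonoid M] [Module R M]

lemma weightedShift_pow_apply {n : ℕ} (e : (Fin n → ℕ) → M) (T : Fin n → M →L[R] M)
    (a : Fin n → (Fin n → ℕ) → R) (hT : ∀ j k, T j (e k) = a j k • e (k + Pi.single j 1))
    (j : Fin n) (m : ℕ) (k : Fin n → ℕ) :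
    (T j ^ m) (e k) = (∏ t ∈ range m, a j (k + Pi.single j t)) • e (k + Pi.single j m) := by
  induction m with
  | zero => simp
  | succ m ih =>
    rw [pow_succ', mul_apply_eq_comp, ih, map_smul, hT, smul_smul, prod_range_succ,
      add_assoc, ← Pi.single_add, mul_comm]

lemma weightedShift_ofFn_prod_apply_zero {n : ℕ} (e : (Fin n → ℕ) → M) (T : Fin n → M →L[R] M)
    (a : Fin n → (Fin n → ℕ) → R) (hT : ∀ j k, T j (e k) = a j k • e (k + Pi.single j 1))
    (k : Fin n → ℕ) :
    (List.ofFn fun i => T i ^ k i).prod (e 0) =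
      (∏ j, ∏ t ∈ range (k j), a j (ladderIndex k j t)) • e k := by
  induction n with
  | zero => simp [Subsingleton.elim k 0]
  | succ n ih =>
    have hzero : (Fin.cons 0 0 : Fin (n + 1) → ℕ) = 0 := Matrix.cons_zero_zero
    have htail := ih (fun m => e (Fin.cons 0 m)) (fun j => T j.succ)
      (fun j m => a j.succ (Fin.cons 0 m))
      (fun j m => by simp only [hT, cons_zero_add_single_succ]) (Fin.tail k)
    simp only [hzero, Fin.tail] at htail
    have hk : Fin.cons 0 (Fin.tail k) + Pi.single 0 (k 0) = k := by
      ext i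
      refine Fin.cases ?_ (fun i => ?_) i <;> simp [Fin.tail]
    rw [List.ofFn_succ, List.prod_cons, mul_apply_eq_comp, htail, map_smul,
      weightedShift_pow_apply e T a hT, smul_smul, Fin.prod_univ_succ]
    simp only [ladderIndex_zero, ladderIndex_succ, hk, mul_comm]

end WeightedShift

noncomputable def fockWeight (q : ℝ) {n : ℕ} (j : Fin n) (k : Fin n → ℕ) : ℝ :=
  Real.sqrt (1 - q ^ 2) * Real.sqrt (qNum (q ^ 2) (k j + 1)) *
    q ^ (∑ i ∈ univ.filter (fun i : Fin n => j < i), k i)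

noncomputable def fockAmplitude (q : ℝ) {n : ℕ} (k : Fin n → ℕ) : ℝ :=
  ∏ j, ∏ t ∈ range (k j), fockWeight q j (ladderIndex k j t)

lemma fock_monomial_apply_vacuum {q : ℝ} {n : ℕ} {M : Type*} [TopologicalSpace M]
    [AddCommMonoid M] [Module ℂ M] (e : (Fin n → ℕ) → M) (T : Fin n → M →L[ℂ] M)
    (hT : ∀ j k, T j (e k) = (fockWeight q j k : ℂ) • e (k + Pi.single j 1)) (k : Fin n → ℕ) :
    (List.ofFn fun i => T i ^ k i).prod (e 0) = (fockAmplitude q k : ℂ) • e k := by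
  simp only [weightedShift_ofFn_prod_apply_zero e T _ hT, fockAmplitude, Complex.ofReal_prod]

lemma sq_fockWeight_ladderIndex {q : ℝ} (hq : q ^ 2 ≤ 1) {n : ℕ} (k : Fin n → ℕ) (j : Fin n)
    (t : ℕ) :
    fockWeight q j (ladderIndex k j t) ^ 2 =
      (1 - (q ^ 2) ^ (t + 1)) * (q ^ (∑ i ∈ univ.filter (fun i : Fin n => j < i), k i)) ^ 2 := by
  have htail : ∑ i ∈ univ.filter (fun i : Fin n => j < i), ladderIndex k j t i =
      ∑ i ∈ univ.filter (fun i : Fin n => j < i), k i :=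
    sum_congr rfl fun i hi => if_pos (mem_filter.1 hi).2
  have hdiag : ladderIndex k j t j = t := by simp [ladderIndex]
  have hqNum : 0 ≤ qNum (q ^ 2) (t + 1) := sum_nonneg fun _ _ => by positivity
  rw [fockWeight, htail, hdiag, mul_pow, mul_pow, Real.sq_sqrt (by linarith),
    Real.sq_sqrt hqNum, one_sub_mul_qNum]

lemma fockAmplitude_sq_ge {q : ℝ} (hq0 : 0 ≤ q) (hq1 : q < 1) {n : ℕ} (k : Fin n → ℕ) :
    (∏' j : ℕ, (1 - (q ^ 2) ^ (j + 1))) ^ n * (q ^ sumLT k k) ^ 2 ≤ fockAmplitude q k ^ 2 := by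
  have hq2 : q ^ 2 < 1 := by nlinarith
  set P := ∏' j : ℕ, (1 - (q ^ 2) ^ (j + 1))
  have hP : 0 ≤ P := tprod_nonneg fun _ => sub_nonneg.2 (pow_le_one₀ (sq_nonneg q) hq2.le)
  calc P ^ n * (q ^ sumLT k k) ^ 2
      = ∏ j, P * ((q ^ (∑ i ∈ univ.filter (fun i : Fin n => j < i), k i)) ^ 2) ^ k j := by
        rw [prod_mul_distrib, prod_const, card_univ, Fintype.card_fin, sumLT_eq_sum_mul_sum_gt,
          ← prod_pow_eq_pow_sum, ← prod_pow]
        exact congrArg (P ^ n * ·) (prod_congr rfl fun j _ => by ring)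
    _ ≤ ∏ j, (∏ t ∈ range (k j), (1 - (q ^ 2) ^ (t + 1))) *
          ((q ^ (∑ i ∈ univ.filter (fun i : Fin n => j < i), k i)) ^ 2) ^ k j :=
        prod_le_prod (fun _ _ => by positivity) fun j _ => mul_le_mul_of_nonneg_right
          (tprod_one_sub_pow_succ_le_prod_range (sq_nonneg q) hq2 (k j)) (by positivity)
    _ = fockAmplitude q k ^ 2 := by
        simp only [fockAmplitude, ← prod_pow, sq_fockWeight_ladderIndex hq2.le, prod_mul_distrib,
          prod_const, card_range]

theorem stmt17_general {n : ℕ} (q : ℝ) (hq0 : 0 < q) (hq1 : q < 1) (ρ : ℝ)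
    (H : Type*) [NormedAddCommGroup H] [InnerProductSpace ℂ H]
    (e : (Fin n → ℕ) → H) (he : Orthonormal ℂ e)
    (T : Fin n → H →L[ℂ] H)
    (hT : ∀ (j : Fin n) (k : Fin n → ℕ),
      T j (e k) =
        ((Real.sqrt (1 - q ^ 2) * Real.sqrt (qNum (q ^ 2) (k j + 1)) *
            q ^ (∑ i ∈ Finset.univ.filter (fun i : Fin n => j < i), k i) : ℝ) : ℂ) •
          e (k + Pi.single j 1))
    (c : (Fin n → ℕ) →₀ ℂ) :
    (∏' j : ℕ, (1 - (q ^ 2) ^ (j + 1))) ^ n *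
        ∑ k ∈ c.support,
          ‖c k‖ ^ 2 * (q ^ (sumLT k k)) ^ 2 * ρ ^ (2 * ∑ i, k i) ≤
      ‖∑ k ∈ c.support,
          (c k * (ρ : ℂ) ^ (∑ i, k i)) • (List.ofFn fun i => (T i) ^ (k i)).prod‖ ^ 2 := by
  set A := ∑ k ∈ c.support, (c k * (ρ : ℂ) ^ (∑ i, k i)) • (List.ofFn fun i => T i ^ k i).prod
  set l : (Fin n → ℕ) → ℂ := fun k => c k * (ρ : ℂ) ^ (∑ i, k i) * fockAmplitude q k
  have hA : A (e 0) = ∑ k ∈ c.support, l k • e k := by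
    simp only [A, l, _root_.sum_apply, smul_apply, fock_monomial_apply_vacuum e T hT, smul_smul]
  have hl : ∀ k, ‖l k‖ ^ 2 = ‖c k‖ ^ 2 * ρ ^ (2 * ∑ i, k i) * fockAmplitude q k ^ 2 := fun k => by
    simp only [l, norm_mul, norm_pow, Complex.norm_real, Real.norm_eq_abs, mul_pow, ← pow_mul]
    rw [mul_comm (∑ i, k i) 2, pow_mul, pow_mul, sq_abs, sq_abs]
  calc (∏' j : ℕ, (1 - (q ^ 2) ^ (j + 1))) ^ n *
        ∑ k ∈ c.support, ‖c k‖ ^ 2 * (q ^ sumLT k k) ^ 2 * ρ ^ (2 * ∑ i, k i)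
      = ∑ k ∈ c.support, ‖c k‖ ^ 2 * ρ ^ (2 * ∑ i, k i) *
          ((∏' j : ℕ, (1 - (q ^ 2) ^ (j + 1))) ^ n * (q ^ sumLT k k) ^ 2) := by
        rw [mul_sum]
        exact sum_congr rfl fun k _ => by ring
    _ ≤ ∑ k ∈ c.support, ‖l k‖ ^ 2 := sum_le_sum fun k _ => by
        rw [hl]
        exact mul_le_mul_of_nonneg_left (fockAmplitude_sq_ge hq0.le hq1 k)
          (by rw [pow_mul]; positivity)
    _ = ‖A (e 0)‖ ^ 2 := by rw [hA]; exact (he.orthogonalFamily.norm_sum l c.support).symm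
    _ ≤ ‖A‖ ^ 2 := pow_le_pow_left₀ (norm_nonneg _) (A.unit_le_opNorm _ (he.1 0).le) 2

/-- For `q ∈ (0,1)`, `ρ > 0` and `a = Σ_k c_k x^k ∈ 𝒪_q^reg(ℂⁿ)`, the Fock-representation
operator norm satisfies `‖π(γ_ρ(a))‖² ≥ (q²;q²)_∞ⁿ Σ_k |c_k|² w_q(k)² ρ^(2|k|)`, where
`w_q(k) = q^(Σ_{i<j} kᵢ kⱼ)` and `γ_ρ(xᵢ) = ρ xᵢ`.  The Fock representation `π` is any
family of operators `T j` on a Hilbert space acting on an orthonormal family `{e_k}` by the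
Pusz–Woronowicz formula, and `π(γ_ρ(a)) = Σ_k c_k ρ^|k| π(x^k)`. -/
theorem stmt17 {n : ℕ} (q : ℝ) (hq0 : 0 < q) (hq1 : q < 1) (ρ : ℝ) (hρ : 0 < ρ)
    (H : Type*) [NormedAddCommGroup H] [InnerProductSpace ℂ H]
    (e : (Fin n → ℕ) → H) (he : Orthonormal ℂ e)
    (T : Fin n → H →L[ℂ] H)
    (hT : ∀ (j : Fin n) (k : Fin n → ℕ),
      T j (e k) =
        ((Real.sqrt (1 - q ^ 2) * Real.sqrt (qNum (q ^ 2) (k j + 1)) *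
            q ^ (∑ i ∈ Finset.univ.filter (fun i : Fin n => j < i), k i) : ℝ) : ℂ) •
          e (k + Pi.single j 1))
    (c : (Fin n → ℕ) →₀ ℂ) :
    (∏' j : ℕ, (1 - (q ^ 2) ^ (j + 1))) ^ n *
        ∑ k ∈ c.support,
          ‖c k‖ ^ 2 * (q ^ (sumLT k k)) ^ 2 * ρ ^ (2 * ∑ i, k i) ≤
      ‖∑ k ∈ c.support,
          (c k * (ρ : ℂ) ^ (∑ i, k i)) • (List.ofFn fun i => (T i) ^ (k i)).prod‖ ^ 2 :=
  stmt17_general q hq0 hq1 ρ H e he T hT c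
end

section
/- For every multi-index k ∈ ℤ₊ⁿ and every integer m with 0 ≤ m ≤ Σ_{i<j} k_i k_j, there exists a word α ∈ {1,…,n}^{|k|} with letter-content p(α) = k, at most n+2 descent-blocks (s(α) ≤ n+2), and m(α) = m, so that x^k = x_α z^m holds in the algebra 𝒪_def^reg(ℂⁿ). -/
open Finset

/-- The number of inversions of a word `α : Fin d → Fin n`. -/
def inversions {d n : ℕ} (α : Fin d → Fin n) : ℕ :=
  (Finset.univ.filter (fun p : Fin d × Fin d => p.1 < p.2 ∧ α p.2 < α p.1)).card

/-- `s(α)`: the number of indices `i` with `α_i ≠ α_{i+1}`. -/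
def sCount {d n : ℕ} (α : Fin d → Fin n) : ℕ :=
  (Finset.univ.filter
    (fun i : Fin d => ∃ h : (i : ℕ) + 1 < d, α i ≠ α ⟨(i : ℕ) + 1, h⟩)).card


/-!
Build the word from the top letter down. Let `n` be the top letter and `S` the number of
smaller letters (with multiplicity); a copy of `n` creates one inversion for each smaller
letter standing after it. If `m ≥ kₙ S`, put all copies of `n` in front and recurse with
`m - kₙ S`; otherwise write `m = t S + s` with `s < S`, put `t` copies of `n` in front of the
sorted word on the smaller letters, one copy just before its last `s` letters, and the
remaining copies at the end. The first case adds at most one letter change to the recursively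
built word; in the second, the sorted word on the `n` smaller letters has at most `n - 1`
changes and the copies of `n` add at most four. So a word on `n + 1` letters has at most
`(n + 1) + 2` changes. Finally, insertion sort turns `x_α` into `x^k`, and each inversion it
removes costs one factor `z`.
-/

section Inversions
variable {β : Type*} [LinearOrder β]

def invCount : List β → ℕ
  | [] => 0
  | a :: t => t.countP (· < a) + invCount t

@[simp] lemma invCount_nil : invCount ([] : List β) = 0 := rfl

@[simp] lemma invCount_cons (a : β) (t : List β) :
    invCount (a :: t) = t.countP (· < a) + invCount t := rfl

lemma invCount_replicate_append (a : β) (t : ℕ) (w : List β) :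
    invCount (List.replicate t a ++ w) = t * w.countP (· < a) + invCount w := by
  induction t with
  | zero => simp
  | succ t ih =>
    simp only [List.replicate_succ, List.cons_append, invCount_cons, List.countP_append,
      List.countP_replicate, lt_self_iff_false, decide_false, Bool.false_eq_true, ↓reduceIte,
      zero_add, ih]
    ring

lemma invCount_append_replicate {a : β} {w : List β} (h : ∀ b ∈ w, b ≤ a) (q : ℕ) :
    invCount (w ++ List.replicate q a) = invCount w := by
  induction w with
  | nil => simpa using invCount_replicate_append a q []
  | cons b w ih =>
    have hba : ¬ a < b := not_lt.2 (h b List.mem_cons_self)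
    simp [List.countP_append, List.countP_replicate, hba,
      ih fun c hc => h c (List.mem_cons_of_mem _ hc)]

lemma invCount_append_cons {a : β} {u : List β} (h : ∀ b ∈ u, b < a) (v : List β) :
    invCount (u ++ a :: v) = invCount (u ++ v) + v.countP (· < a) := by
  induction u with
  | nil => simp [add_comm]
  | cons b u ih =>
    have hab : ¬ a < b := not_lt.2 (h b List.mem_cons_self).le
    simp only [List.cons_append, invCount_cons, List.countP_append, hab, decide_false,
      Bool.false_eq_true, not_false_eq_true, List.countP_cons_of_neg,
      ih fun c hc => h c (List.mem_cons_of_mem _ hc)]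
    ring

lemma invCount_map {γ : Type*} [LinearOrder γ] {f : β → γ} (hf : StrictMono f) (l : List β) :
    invCount (l.map f) = invCount l := by
  induction l with
  | nil => rfl
  | cons a t ih => simp [List.countP_map, Function.comp_def, hf.lt_iff_lt, ih]

end Inversions

section Changes
variable {β : Type*} [DecidableEq β]

def changeCount : List β → ℕ
  | [] => 0
  | [_] => 0
  | a :: b :: t => (if a = b then 0 else 1) + changeCount (b :: t)

@[simp] lemma changeCount_nil : changeCount ([] : List β) = 0 := rfl

@[simp] lemma changeCount_singleton (a : β) : changeCount [a] = 0 := rfl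

lemma changeCount_cons_cons (a b : β) (t : List β) :
    changeCount (a :: b :: t) = (if a = b then 0 else 1) + changeCount (b :: t) := rfl

lemma changeCount_append_le (u v : List β) :
    changeCount (u ++ v) ≤ changeCount u + changeCount v + 1 := by
  induction u with
  | nil => simp
  | cons a u ih =>
    cases u with
    | nil =>
      cases v with
      | nil => simp
      | cons b v =>
        rw [List.singleton_append, changeCount_cons_cons, changeCount_singleton]
        split <;> omega
    | cons c u => simp only [List.cons_append, changeCount_cons_cons] at ih ⊢; omega

lemma changeCount_le_append (u v : List β) :
    changeCount u + changeCount v ≤ changeCount (u ++ v) := by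
  induction u with
  | nil => simp
  | cons a u ih =>
    cases u with
    | nil =>
      cases v with
      | nil => simp
      | cons b v => rw [List.singleton_append, changeCount_cons_cons]; simp
    | cons c u => simp only [List.cons_append, changeCount_cons_cons] at ih ⊢; omega

@[simp] lemma changeCount_replicate (t : ℕ) (a : β) : changeCount (List.replicate t a) = 0 := by
  induction t with
  | zero => rfl
  | succ t ih =>
    cases t with
    | zero => rfl
    | succ t =>
      rw [List.replicate_succ, List.replicate_succ, changeCount_cons_cons, if_pos rfl, zero_add,
        ← List.replicate_succ, ih]

lemma changeCount_map {γ : Type*} [DecidableEq γ] {f : β → γ} (hf : f.Injective)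
    (l : List β) :
    changeCount (l.map f) = changeCount l := by
  induction l with
  | nil => rfl
  | cons a t ih =>
    cases t with
    | nil => rfl
    | cons b t =>
      simp only [List.map_cons, changeCount_cons_cons] at ih ⊢
      simp [ih, hf.eq_iff]

end Changes

section InsertTop
variable {β : Type*}

lemma perm_take_append_cons_drop (a : β) (u : List β) (c : ℕ) :
    (u.take c ++ a :: u.drop c).Perm (a :: u) :=
  List.perm_middle.trans (by rw [List.take_append_drop])

def insertTop (a : β) (u : List β) (t c q : ℕ) : List β :=
  List.replicate t a ++ ((u.take c ++ a :: u.drop c) ++ List.replicate q a)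

lemma insertTop_perm [DecidableEq β] (a : β) (u : List β) (t c q : ℕ) :
    (insertTop a u t c q).Perm (u ++ List.replicate (t + 1 + q) a) := by
  have hmid := perm_take_append_cons_drop a u c
  refine ((hmid.append_right _).append_left _).trans (List.perm_iff_count.2 fun b => ?_)
  simp only [List.count_append, List.count_cons, List.count_replicate, beq_iff_eq]
  split_ifs <;> omega

lemma invCount_insertTop [LinearOrder β] {a : β} {u : List β} (h : ∀ b ∈ u, b < a) (t c q : ℕ) :
    invCount (insertTop a u t c q) = t * u.length + (u.length - c) + invCount u := by
  have hmid := perm_take_append_cons_drop a u c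
  have hle : ∀ b ∈ a :: u, b ≤ a := by simpa using fun b hb => (h b hb).le
  have hcount : ∀ v ⊆ u, v.countP (· < a) = v.length := fun v hv =>
    List.countP_eq_length.2 (by simpa using fun b hb => h b (hv hb))
  rw [insertTop, invCount_replicate_append,
    invCount_append_replicate fun b hb => hle b (hmid.subset hb),
    List.countP_append, invCount_append_cons fun b hb => h b (List.mem_of_mem_take hb),
    List.take_append_drop, hmid.countP_eq, List.countP_cons, hcount u (List.Subset.refl u),
    hcount _ (List.drop_subset _ _), List.countP_replicate]
  simp only [lt_self_iff_false, decide_false, Bool.false_eq_true, ↓reduceIte, add_zero,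
    List.length_drop]
  ring

lemma changeCount_insertTop_le [DecidableEq β] (a : β) (u : List β) (t c q : ℕ) :
    changeCount (insertTop a u t c q) ≤ changeCount u + 4 := by
  have h₁ := changeCount_append_le (u.take c) (a :: u.drop c)
  have h₂ := changeCount_append_le [a] (u.drop c)
  have h₃ := changeCount_le_append (u.take c) (u.drop c)
  have h₄ := changeCount_append_le (u.take c ++ a :: u.drop c) (List.replicate q a)
  have h₅ := changeCount_append_le (List.replicate t a)
    ((u.take c ++ a :: u.drop c) ++ List.replicate q a)
  rw [List.take_append_drop] at h₃
  simp only [changeCount_singleton, List.singleton_append, changeCount_replicate] at *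
  rw [insertTop]
  omega

end InsertTop

section Construction
variable (k : ℕ → ℕ)

def sortedWord : ℕ → List ℕ
  | 0 => []
  | n + 1 => sortedWord n ++ List.replicate (k n) n

def wordWithInversions : ℕ → ℕ → List ℕ
  | 0, _ => []
  | n + 1, m =>
    let S := ∑ i ∈ range n, k i
    if k n * S ≤ m then List.replicate (k n) n ++ wordWithInversions n (m - k n * S)
    -- here `S > 0` and `m / S < k n`, since otherwise the first branch applies
    else insertTop n (sortedWord k n) (m / S) (S - m % S) (k n - 1 - m / S)

variable {k}

lemma lt_of_mem_sortedWord {n a : ℕ} (h : a ∈ sortedWord k n) : a < n := by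
  induction n with
  | zero => simp [sortedWord] at h
  | succ n ih =>
    rcases List.mem_append.1 h with h | h
    · exact (ih h).trans n.lt_succ_self
    · simp [List.eq_of_mem_replicate h]

lemma length_sortedWord (n : ℕ) : (sortedWord k n).length = ∑ i ∈ range n, k i := by
  induction n with
  | zero => rfl
  | succ n ih => simp [sortedWord, ih, Finset.sum_range_succ]

lemma countP_lt_sortedWord (n : ℕ) :
    (sortedWord k n).countP (· < n) = ∑ i ∈ range n, k i := by
  rw [List.countP_eq_length.2 (by simpa using fun a => lt_of_mem_sortedWord), length_sortedWord]

lemma count_sortedWord {n i : ℕ} (hi : i < n) : (sortedWord k n).count i = k i := by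
  induction n with
  | zero => omega
  | succ n ih =>
    rw [sortedWord, List.count_append, List.count_replicate]
    rcases (Nat.lt_succ_iff_lt_or_eq.1 hi) with hi | rfl
    · simp [ih hi, hi.ne']
    · simp [List.count_eq_zero_of_not_mem fun h => (lt_of_mem_sortedWord h).false]

lemma invCount_sortedWord (n : ℕ) : invCount (sortedWord k n) = 0 := by
  induction n with
  | zero => rfl
  | succ n ih =>
    rw [sortedWord, invCount_append_replicate fun b hb => (lt_of_mem_sortedWord hb).le, ih]

lemma changeCount_sortedWord_succ (n : ℕ) : changeCount (sortedWord k (n + 1)) ≤ n := by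
  induction n with
  | zero => simp [sortedWord]
  | succ n ih =>
    have := changeCount_append_le (sortedWord k (n + 1)) (List.replicate (k (n + 1)) (n + 1))
    rw [changeCount_replicate] at this
    rw [sortedWord]
    omega

lemma wordWithInversions_perm (n m : ℕ) : (wordWithInversions k n m).Perm (sortedWord k n) := by
  induction n generalizing m with
  | zero => rfl
  | succ n ih =>
    simp only [wordWithInversions, sortedWord]
    split_ifs with h
    · exact ((ih _).append_left _).trans List.perm_append_comm
    · set S := ∑ i ∈ range n, k i
      have hS : 0 < S := Nat.pos_of_ne_zero fun h0 => h (by simp [h0])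
      have ht : m / S < k n := (Nat.div_lt_iff_lt_mul hS).2 (by linarith)
      convert insertTop_perm n (sortedWord k n) _ _ _ using 3
      omega

lemma lt_of_mem_wordWithInversions {n m a : ℕ} (h : a ∈ wordWithInversions k n m) : a < n :=
  lt_of_mem_sortedWord ((wordWithInversions_perm n m).subset h)

lemma invCount_wordWithInversions {n m : ℕ}
    (hm : m ≤ ∑ j ∈ range n, k j * ∑ i ∈ range j, k i) :
    invCount (wordWithInversions k n m) = m := by
  induction n generalizing m with
  | zero => simp_all [wordWithInversions]
  | succ n ih =>
    rw [Finset.sum_range_succ] at hm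
    simp only [wordWithInversions]
    split_ifs with h
    · rw [invCount_replicate_append, (wordWithInversions_perm n _).countP_eq, countP_lt_sortedWord,
        ih (by omega)]
      exact Nat.add_sub_cancel' h
    · rw [invCount_insertTop (fun b => lt_of_mem_sortedWord), invCount_sortedWord,
        length_sortedWord]
      set S := ∑ i ∈ range n, k i
      have hS : 0 < S := Nat.pos_of_ne_zero fun h0 => h (by simp [h0])
      have := Nat.mod_lt m hS
      have := Nat.div_add_mod' m S
      omega

lemma changeCount_wordWithInversions (n m : ℕ) :
    changeCount (wordWithInversions k n m) ≤ n + 2 := by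
  induction n generalizing m with
  | zero => simp [wordWithInversions]
  | succ n ih =>
    simp only [wordWithInversions]
    split_ifs with h
    · grw [changeCount_append_le, changeCount_replicate, ih]
      omega
    · obtain ⟨n, rfl⟩ : ∃ n', n = n' + 1 :=
        Nat.exists_eq_add_one.2 (Nat.pos_of_ne_zero (by rintro rfl; simp at h))
      grw [changeCount_insertTop_le, changeCount_sortedWord_succ]

end Construction

section Algebra
variable {β M : Type*} [LinearOrder β] [Monoid M] {z : M} {x : β → M}

lemma prod_orderedInsert (hz : ∀ b, Commute (x b) z)
    (hx : ∀ a b, a < b → x a * x b = z * (x b * x a)) (a : β) {s : List β}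
    (hs : s.Pairwise (· ≤ ·)) :
    ((s.orderedInsert (· ≤ ·) a).map x).prod =
      x a * (s.map x).prod * z ^ s.countP (· < a) := by
  induction s with
  | nil => simp
  | cons b s ih =>
    rw [List.pairwise_cons] at hs
    by_cases hab : a ≤ b
    · have : (b :: s).countP (· < a) = 0 := List.countP_eq_zero.2 fun c hc => by
        rcases List.mem_cons.1 hc with rfl | hc
        · simpa using hab
        · simpa using hab.trans (hs.1 c hc)
      simp [hab, this]
    · have hba : b < a := not_le.1 hab
      have hzs : Commute z (s.map x).prod :=
        Commute.list_prod_right _ _ (by simpa using fun c _ => (hz c).symm)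
      have hswap : x a * x b * z = x b * x a := by
        rw [hx b a hba, ((hz a).mul_left (hz b)).eq]
      simp only [List.orderedInsert_cons, hab, if_false, List.map_cons, List.prod_cons, ih hs.2,
        List.countP_cons, hba, decide_true, if_true, pow_succ]
      calc x b * (x a * (s.map x).prod * z ^ s.countP (· < a))
          = x a * x b * z * (s.map x).prod * z ^ s.countP (· < a) := by
            rw [hswap]; simp only [mul_assoc]
        _ = x a * (x b * (s.map x).prod) * (z ^ s.countP (· < a) * z) := by
            rw [mul_assoc (x a * x b) z, hzs.eq, ((Commute.refl z).pow_left _).eq]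
            simp only [mul_assoc]

lemma prod_insertionSort (hz : ∀ b, Commute (x b) z)
    (hx : ∀ a b, a < b → x a * x b = z * (x b * x a)) (l : List β) :
    ((l.insertionSort (· ≤ ·)).map x).prod = (l.map x).prod * z ^ invCount l := by
  induction l with
  | nil => simp
  | cons a l ih =>
    rw [List.insertionSort_cons, prod_orderedInsert hz hx a (List.pairwise_insertionSort _ _), ih,
      (List.perm_insertionSort _ _).countP_eq, List.map_cons, List.prod_cons, invCount_cons,
      add_comm (List.countP _ _), pow_add]
    simp only [mul_assoc]

end Algebra

lemma card_filter_get {β : Type*} (p : β → Prop) [DecidablePred p] (l : List β) :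
    #{j | p (l.get j)} = l.countP (fun b => decide (p b)) := by
  induction l with
  | nil => simp
  | cons a l ih =>
    refine (Fin.card_filter_univ_succ' fun j : Fin (l.length + 1) => p ((a :: l).get j)).trans ?_
    simp only [List.get_eq_getElem] at ih
    simp only [List.get_eq_getElem, Fin.val_zero, List.getElem_cons_zero, Fin.val_succ,
      List.getElem_cons_succ, ih, List.countP_cons, decide_eq_true_eq]
    exact add_comm _ _

section FinWords
variable {n : ℕ}

lemma sumLT_eq_sum_range (k : Fin n → ℕ) :
    sumLT k k = ∑ j ∈ range n, (if h : j < n then k ⟨j, h⟩ else 0) *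
      ∑ i ∈ range j, (if h : i < n then k ⟨i, h⟩ else 0) := by
  set k' : ℕ → ℕ := fun i => if h : i < n then k ⟨i, h⟩ else 0
  have hk' : ∀ i : Fin n, k' i = k i := fun i => by simp [k', i.isLt]
  have hIio : ∀ j : Fin n, ∑ i ∈ Iio j, k i = ∑ i ∈ range j, k' i := fun j => by
    rw [← Nat.Iio_eq_range, ← Fin.map_valEmbedding_Iio, Finset.sum_map]
    simp [hk']
  rw [← Fin.sum_univ_eq_sum_range (fun j => k' j * ∑ i ∈ range j, k' i), sumLT,
    Finset.sum_filter, Fintype.sum_prod_type, Finset.sum_comm]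
  refine Finset.sum_congr rfl fun j _ => ?_
  rw [← Finset.sum_filter, Finset.filter_gt_eq_Iio, ← hIio, hk', Finset.mul_sum]
  simp only [mul_comm]

lemma sCount_succ {d : ℕ} (f : Fin (d + 1) → Fin n) :
    sCount f = (if ∃ h : 1 < d + 1, f 0 ≠ f ⟨1, h⟩ then 1 else 0) +
      sCount fun i : Fin d => f i.succ := by
  rw [sCount, Fin.card_filter_univ_succ', sCount]
  congr 2
  ext i
  simp only [Fin.val_succ, Nat.add_lt_add_iff_right]
  rfl

lemma sCount_get (l : List (Fin n)) : sCount l.get = changeCount l := by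
  induction l with
  | nil => rfl
  | cons a t ih =>
    refine (sCount_succ (d := t.length) _).trans ?_
    cases t with
    | nil =>
      rw [if_neg fun ⟨h, _⟩ => (lt_irrefl 1 h).elim]
      rfl
    | cons b t =>
      rw [changeCount, ← ih]
      congr 1
      by_cases hab : a = b <;> simp [hab]

lemma inversions_eq_sum_card {d : ℕ} (f : Fin d → Fin n) :
    inversions f = ∑ i, #{j | i < j ∧ f j < f i} := by
  simp only [inversions, card_filter, Fintype.sum_prod_type]

lemma inversions_succ {d : ℕ} (f : Fin (d + 1) → Fin n) :
    inversions f = #{j : Fin d | f j.succ < f 0} + inversions fun i : Fin d => f i.succ := by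
  simp [inversions_eq_sum_card, Fin.sum_univ_succ, Fin.card_filter_univ_succ']

lemma inversions_get (l : List (Fin n)) : inversions l.get = invCount l := by
  induction l with
  | nil => rfl
  | cons a t ih =>
    refine (inversions_succ (d := t.length) _).trans ?_
    rw [invCount, ← ih, ← card_filter_get]
    rfl

lemma sum_count_eq_length (l : List (Fin n)) : ∑ i, l.count i = l.length := by
  simpa using Multiset.sum_count_eq_card (s := univ) (m := (l : Multiset (Fin n)))
    fun _ _ => mem_univ _

lemma insertionSort_eq_flatMap_replicate (l : List (Fin n)) :
    l.insertionSort (· ≤ ·) =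
      (List.finRange n).flatMap fun i => List.replicate (l.count i) i := by
  refine List.Perm.eq_of_pairwise' (List.pairwise_insertionSort _ _) ?_
    ((List.perm_insertionSort _ _).trans (List.perm_iff_count.2 fun a => ?_))
  · refine List.pairwise_flatMap.2 ⟨fun i _ => List.pairwise_replicate.2 (Or.inr le_rfl),
      (List.pairwise_lt_finRange n).imp fun hij a ha b hb => ?_⟩
    rw [List.eq_of_mem_replicate ha, List.eq_of_mem_replicate hb]
    exact hij.le
  · simp [List.count_flatMap, Function.comp_def, List.count_replicate, ← Fin.sum_univ_def]

lemma prod_ofFn_pow_count {M : Type*} [Monoid M] {z : M} {x : Fin n → M}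
    (hz : ∀ i, Commute (x i) z) (hx : ∀ i j, i < j → x i * x j = z * (x j * x i))
    (l : List (Fin n)) :
    (List.ofFn fun i => x i ^ l.count i).prod = (l.map x).prod * z ^ invCount l := by
  rw [← prod_insertionSort hz hx, insertionSort_eq_flatMap_replicate]
  simp [List.flatMap_def, List.prod_flatten, List.ofFn_eq_map, Function.comp_def]

theorem exists_list_count_changeCount_invCount (k : Fin n → ℕ) {m : ℕ}
    (hm : m ≤ sumLT k k) : ∃ l : List (Fin n),
      (∀ i, l.count i = k i) ∧ changeCount l ≤ n + 2 ∧ invCount l = m := by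
  set k' : ℕ → ℕ := fun i => if h : i < n then k ⟨i, h⟩ else 0
  set w := wordWithInversions k' n m
  have hw : ∀ a ∈ w, a < n := fun a => lt_of_mem_wordWithInversions
  set l := w.pmap Fin.mk hw
  have hl : l.map Fin.val = w := by simp [l, List.map_pmap]
  refine ⟨l, fun i => ?_, ?_, ?_⟩
  · rw [← List.count_map_of_injective _ _ Fin.val_injective, hl,
      (wordWithInversions_perm n m).count_eq, count_sortedWord i.isLt]
    simp [k']
  · rw [← changeCount_map Fin.val_injective, hl]
    exact changeCount_wordWithInversions n m
  · rw [← invCount_map Fin.val_strictMono, hl]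
    exact invCount_wordWithInversions (sumLT_eq_sum_range k ▸ hm)

end FinWords

/-- For every `k ∈ ℤ₊ⁿ` and every `0 ≤ m ≤ Σ_{i<j} kᵢ kⱼ`, there is a word `α` with
letter-content `k`, with `s(α) ≤ n+2`, and with `m(α) = m`, so that `x^k = x_α z^m` holds
in `𝒪_def^reg(ℂⁿ)`, i.e. in every algebra generated by a central invertible `z` and
`x₁,…,xₙ` subject to `xᵢ xⱼ = z xⱼ xᵢ` (`i < j`). -/
theorem stmt19 {n : ℕ} (k : Fin n → ℕ) (m : ℕ) (hm : m ≤ sumLT k k) :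
    ∃ α : Fin (∑ i, k i) → Fin n,
      (∀ i : Fin n, (Finset.univ.filter (fun j => α j = i)).card = k i) ∧
      sCount α ≤ n + 2 ∧
      inversions α = m ∧
      ∀ (A : Type) [Ring A] (z : A) (x : Fin n → A), IsUnit z →
        (∀ i, Commute (x i) z) →
        (∀ i j : Fin n, i < j → x i * x j = z * (x j * x i)) →
        (List.ofFn fun i => x i ^ k i).prod = (List.ofFn fun j => x (α j)).prod * z ^ m := by
  obtain ⟨l, hcount, hchange, rfl⟩ := exists_list_count_changeCount_invCount k hm
  obtain rfl : k = fun i => l.count i := funext fun i => (hcount i).symm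
  rw [sum_count_eq_length]
  refine ⟨l.get, fun i => Fin.card_filter_univ_eq_vector_get_eq_count i ⟨l, rfl⟩,
    (sCount_get l).trans_le hchange, inversions_get l, fun A _ z x _ hz hx => ?_⟩
  rw [prod_ofFn_pow_count hz hx, ← List.ofFn_getElem_eq_map l x]
  rfl
end
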